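/- Define the polynomials in z₁, z₂, z₃, z₄: C₀ = C₂ = −(−z₂z₄ + z₂z₃z₄ − z₃ + z₁z₃ + z₄ − z₁z₃z₄)(z₃ + z₂ − z₄ − z₁ − z₁z₃z₄ + z₁z₂z₃ − z₁z₂z₄ + z₂z₃z₄ − 2z₂z₃ + 2z₁z₄) and C₁ = −6z₁z₃z₄ + 4z₂²z₄z₁ − 4z₂²z₁z₃ + 4z₃²z₂²z₁ + 4z₄²z₁²z₂ − 4z₁²z₂z₄ + 4z₁²z₃z₂ − 2z₁z₃z₂ − 2z₂z₄z₁ − 6z₃z₂z₄ − 6z₂z₄²z₁z₃ + 16z₂z₄z₁z₃ − 2z₁²z₃z₄²z₂ − 2z₃²z₁z₂ − 2z₁²z₃²z₂ − 2z₄²z₂z₁ − 2z₁²z₃z₄ + 2z₁²z₃²z₄ − 2z₃²z₂²z₄² − 2z₃z₂²z₄ − 2z₂²z₄²z₁ + 2z₂²z₄²z₃ + 4z₃²z₂²z₄ − 2z₁²z₃²z₄² + 4z₁²z₃z₄² − 2z₃² − 2z₄² − 4z₃²z₂² + 2z₁z₃ − 2z₂z₃ + 4z₄z₃ + 4z₄z₁²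 − 4z₄²z₁² + 2z₂z₄ + 4z₁z₄² − 2z₁z₄ + 2z₁z₃² − 2z₁²z₃ + 4z₃²z₂ − 2z₂²z₄ + 2z₂z₄² + 2z₁²z₃²z₄z₂ + 4z₃z₂² + 2z₃z₂²z₄²z₁ − 2z₃²z₂²z₄z₁ − 2z₂²z₄z₁z₃ + 4z₁z₃²z₄²z₂ − 2z₁²z₃z₂z₄ − 6z₁z₃²z₂z₄. Further set D₂ = z₁z₄ − z₂z₃ − z₄ + z₂ + z₃ − z₁ and Q = −z₁z₂z₃ − z₂z₃z₄ + z₂z₃ + z₁z₂z₄ + z₁z₃z₄ − z₁z₄. Then the polynomial identity C₁² − 4·C₀·C₂ = 16(z₁−1)(z₂−1)(z₃−1)(z₄−1)(z₁−z₂)(z₃−z₄)·D₂·Q holds in ℂ[z₁, z₂, z₃, z₄]. -/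
import Mathlib


/-- The polynomial `C₀ = C₂`. -/
def C0 {R : Type*} [CommRing R] (z₁ z₂ z₃ z₄ : R) : R :=
  -((-(z₂ * z₄) + z₂ * z₃ * z₄ - z₃ + z₁ * z₃ + z₄ - z₁ * z₃ * z₄) *
    (z₃ + z₂ - z₄ - z₁ - z₁ * z₃ * z₄ + z₁ * z₂ * z₃ - z₁ * z₂ * z₄ + z₂ * z₃ * z₄
      - 2 * (z₂ * z₃) + 2 * (z₁ * z₄)))

/-- The polynomial `C₂ (= C₀)`. -/
def C2 {R : Type*} [CommRing R] (z₁ z₂ z₃ z₄ : R) : R := C0 z₁ z₂ z₃ z₄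

/-- The polynomial `C₁`. -/
def C1 {R : Type*} [CommRing R] (z₁ z₂ z₃ z₄ : R) : R :=
  -(6 * (z₁ * z₃ * z₄)) + 4 * (z₂ ^ 2 * z₄ * z₁) - 4 * (z₂ ^ 2 * z₁ * z₃)
    + 4 * (z₃ ^ 2 * z₂ ^ 2 * z₁) + 4 * (z₄ ^ 2 * z₁ ^ 2 * z₂) - 4 * (z₁ ^ 2 * z₂ * z₄)
    + 4 * (z₁ ^ 2 * z₃ * z₂) - 2 * (z₁ * z₃ * z₂) - 2 * (z₂ * z₄ * z₁)
    - 6 * (z₃ * z₂ * z₄) - 6 * (z₂ * z₄ ^ 2 * z₁ * z₃) + 16 * (z₂ * z₄ * z₁ * z₃)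
    - 2 * (z₁ ^ 2 * z₃ * z₄ ^ 2 * z₂) - 2 * (z₃ ^ 2 * z₁ * z₂) - 2 * (z₁ ^ 2 * z₃ ^ 2 * z₂)
    - 2 * (z₄ ^ 2 * z₂ * z₁) - 2 * (z₁ ^ 2 * z₃ * z₄) + 2 * (z₁ ^ 2 * z₃ ^ 2 * z₄)
    - 2 * (z₃ ^ 2 * z₂ ^ 2 * z₄ ^ 2) - 2 * (z₃ * z₂ ^ 2 * z₄) - 2 * (z₂ ^ 2 * z₄ ^ 2 * z₁)
    + 2 * (z₂ ^ 2 * z₄ ^ 2 * z₃) + 4 * (z₃ ^ 2 * z₂ ^ 2 * z₄) - 2 * (z₁ ^ 2 * z₃ ^ 2 * z₄ ^ 2)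
    + 4 * (z₁ ^ 2 * z₃ * z₄ ^ 2) - 2 * z₃ ^ 2 - 2 * z₄ ^ 2 - 4 * (z₃ ^ 2 * z₂ ^ 2)
    + 2 * (z₁ * z₃) - 2 * (z₂ * z₃) + 4 * (z₄ * z₃) + 4 * (z₄ * z₁ ^ 2)
    - 4 * (z₄ ^ 2 * z₁ ^ 2) + 2 * (z₂ * z₄) + 4 * (z₁ * z₄ ^ 2) - 2 * (z₁ * z₄)
    + 2 * (z₁ * z₃ ^ 2) - 2 * (z₁ ^ 2 * z₃) + 4 * (z₃ ^ 2 * z₂) - 2 * (z₂ ^ 2 * z₄)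
    + 2 * (z₂ * z₄ ^ 2) + 2 * (z₁ ^ 2 * z₃ ^ 2 * z₄ * z₂) + 4 * (z₃ * z₂ ^ 2)
    + 2 * (z₃ * z₂ ^ 2 * z₄ ^ 2 * z₁) - 2 * (z₃ ^ 2 * z₂ ^ 2 * z₄ * z₁)
    - 2 * (z₂ ^ 2 * z₄ * z₁ * z₃) + 4 * (z₁ * z₃ ^ 2 * z₄ ^ 2 * z₂)
    - 2 * (z₁ ^ 2 * z₃ * z₂ * z₄) - 6 * (z₁ * z₃ ^ 2 * z₂ * z₄)

/-- The polynomial `D₂ = z₁z₄ - z₂z₃ - z₄ + z₂ + z₃ - z₁`. -/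
def D2 {R : Type*} [CommRing R] (z₁ z₂ z₃ z₄ : R) : R :=
  z₁ * z₄ - z₂ * z₃ - z₄ + z₂ + z₃ - z₁

/-- The polynomial `Q = -z₁z₂z₃ - z₂z₃z₄ + z₂z₃ + z₁z₂z₄ + z₁z₃z₄ - z₁z₄`. -/
def Qpoly {R : Type*} [CommRing R] (z₁ z₂ z₃ z₄ : R) : R :=
  -(z₁ * z₂ * z₃) - z₂ * z₃ * z₄ + z₂ * z₃ + z₁ * z₂ * z₄ + z₁ * z₃ * z₄ - z₁ * z₄

open MvPolynomial in
/-- the discriminant identity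
`C₁² - 4 C₀ C₂ = 16 (z₁-1)(z₂-1)(z₃-1)(z₄-1)(z₁-z₂)(z₃-z₄) D₂ Q`
holds in the polynomial ring `ℂ[z₁, z₂, z₃, z₄]`. -/
theorem statement14 :
    (C1 (X 0) (X 1) (X 2) (X 3) : MvPolynomial (Fin 4) ℂ) ^ 2
        - 4 * C0 (X 0) (X 1) (X 2) (X 3) * C2 (X 0) (X 1) (X 2) (X 3)
      = 16 * (X 0 - 1) * (X 1 - 1) * (X 2 - 1) * (X 3 - 1) * (X 0 - X 1) * (X 2 - X 3)
          * D2 (X 0) (X 1) (X 2) (X 3) * Qpoly (X 0) (X 1) (X 2) (X 3) := by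
  simp only [C0, C1, C2, D2, Qpoly]; ring
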